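/- arXiv:2203.07136 — 2 statements merged into one kernel-verified Lean document; each statement's English description precedes it below -/
import Mathlib

section
/- For every fixed β ∈ ℝ^d with β ≠ 0 and every n ≥ 1, almost surely there exists α ∈ ℝ^d such that βᵀ Σ_{α,n} β = βᵀ Σ_n β, i.e. the real-discriminator objective satisfies V_n(α, β) = (βᵀ(Σ_n − Σ_{α,n})β)² = 0; hence almost surely min_{α ∈ ℝ^d} V_n(α, β) = 0. -/
open MeasureTheory ProbabilityTheory Filter Matrix
open scoped Real

noncomputable section

/-- Discrete Fourier transform of `x : ℝ^d` at frequency `ω = 2πk/d`. -/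
def dft (d : ℕ) (x : Fin d → ℝ) (k : Fin d) : ℂ :=
  ∑ u : Fin d, (x u : ℂ) *
    Complex.exp (-(2 * Real.pi * Complex.I * ((k : ℕ) : ℂ) * ((u : ℕ) : ℂ)) / (d : ℂ))

/-- Circular convolution on `ℝ^d` (indices mod `d`). -/
def cconv (d : ℕ) (a z : Fin d → ℝ) : Fin d → ℝ := fun u => ∑ v : Fin d, a v * z (u - v)

/-- Covariance matrix of `a ⋆ Z`, `Z ~ N(0, I_d)` white noise. -/
def covMat (d : ℕ) (a : Fin d → ℝ) : Matrix (Fin d) (Fin d) ℝ :=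
  Matrix.of fun u u' => ∑ v : Fin d, a (u - v) * a (u' - v)

/-- Spectral (operator) norm of a matrix. -/
def specNorm (d : ℕ) (M : Matrix (Fin d) (Fin d) ℝ) : ℝ :=
  ‖Matrix.toEuclideanCLM (𝕜 := ℝ) M‖

/-- Euclidean norm. -/
def l2norm (d : ℕ) (x : Fin d → ℝ) : ℝ := Real.sqrt (∑ u : Fin d, x u ^ 2)

/-- Empirical covariance matrix of the first `n` samples. -/
def empCov (d n : ℕ) (y : ℕ → Fin d → ℝ) : Matrix (Fin d) (Fin d) ℝ :=
  (n : ℝ)⁻¹ • ∑ i ∈ Finset.range n, Matrix.vecMulVec (y i) (y i)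

/-- Empirical mean of `|ŷ(ω)|²` over the first `n` samples. -/
def empPS (d n : ℕ) (y : ℕ → Fin d → ℝ) (k : Fin d) : ℝ :=
  (n : ℝ)⁻¹ * ∑ i ∈ Finset.range n, Complex.normSq (dft d (y i) k)

/-- The consistent-generator set `A_n` (for a fixed sample `(z̄_i, z_i)_{i<n}`). -/
def An (d n : ℕ) (abar : Fin d → ℝ) (zbar z : ℕ → Fin d → ℝ) : Set (Fin d → ℝ) :=
  {a | ∀ k : Fin d, Complex.normSq (dft d a k) =
      empPS d n (fun i => cconv d abar (zbar i)) k / empPS d n z k}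


/-- The combined family of all Gaussian coordinates of the two sample sequences
`z̄` (at `false`) and `z` (at `true`). -/
def coords {Ω : Type*} (d : ℕ) (zbar z : ℕ → Ω → Fin d → ℝ) :
    Bool × ℕ × Fin d → Ω → ℝ :=
  fun p ω => if p.1 then z p.2.1 ω p.2.2 else zbar p.2.1 ω p.2.2

/-- `(z̄_i)` and `(z_i)` are mutually independent i.i.d. `N(0, I_d)` random vectors:
all the real coordinates are independent standard Gaussians. -/
def IsWhiteNoisePair {Ω : Type*} [MeasureSpace Ω] (d : ℕ)
    (zbar z : ℕ → Ω → Fin d → ℝ) : Prop :=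
  (∀ i, Measurable (zbar i)) ∧ (∀ i, Measurable (z i)) ∧
    iIndepFun (coords d zbar z) ℙ ∧
    ∀ p : Bool × ℕ × Fin d, Measure.map (coords d zbar z p) ℙ = gaussianReal 0 1

/-- The real-discriminator objective `V_n(α, β) = (βᵀ (Σ_n − Σ_{α,n}) β)²`, given the
samples `x_i = xs i` and `z_i = zs i`. -/
def Vreal (d n : ℕ) (xs zs : ℕ → Fin d → ℝ) (a b : Fin d → ℝ) : ℝ :=
  (b ⬝ᵥ (empCov d n xs - empCov d n (fun i => cconv d a (zs i))) *ᵥ b) ^ 2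

/-!
Taking `α = c • δ₀` gives `α ⋆ zᵢ = c • zᵢ`, hence `βᵀ Σ_{α,n} β = c² n⁻¹ ∑ᵢ (β ⬝ zᵢ)²`,
which sweeps out `[0, ∞)` as soon as some `β ⬝ zᵢ ≠ 0`; since `βᵀ Σ_n β ≥ 0`, it is matched.
Almost surely `β ⬝ z₀ ≠ 0`: for `β k ≠ 0` the event forces the Gaussian coordinate `z₀ k` to
equal a function of the other, independent, coordinates, which has probability zero because
the Gaussian law has no atoms.
-/

namespace ProbabilityTheory

variable {Ω : Type*} [MeasurableSpace Ω] {μ : Measure Ω} [IsFiniteMeasure μ]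

lemma IndepFun.measure_eq_eq_zero {E : Type*} [MeasurableSpace E] [MeasurableEq E]
    {X Y : Ω → E} (hXY : IndepFun X Y μ) (hX : Measurable X) (hY : Measurable Y)
    [NullSingletonClass (μ.map X)] :
    μ {ω | X ω = Y ω} = 0 := by
  -- Fubini on the product law: `ℙ(X = Y) = ∫ ℙ_X {y} dℙ_Y(y) = 0`.
  have hdiag : MeasurableSet {p : E × E | p.1 = p.2} := measurableSet_diagonal
  rw [show {ω | X ω = Y ω} = (fun ω => (X ω, Y ω)) ⁻¹' {p : E × E | p.1 = p.2} from rfl,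
    ← Measure.map_apply (hX.prodMk hY) hdiag,
    (indepFun_iff_map_prod_eq_prod_map_map hX.aemeasurable hY.aemeasurable).mp hXY,
    Measure.prod_apply_symm hdiag]
  simp [Set.preimage, measure_singleton]

lemma iIndepFun.ae_sum_mul_ne_zero {ι : Type*} [Fintype ι] [DecidableEq ι] {X : ι → Ω → ℝ}
    (hind : iIndepFun X μ) (hX : ∀ i, Measurable (X i)) {b : ι → ℝ} {k : ι} (hk : b k ≠ 0)
    [NullSingletonClass (μ.map (X k))] :
    ∀ᵐ ω ∂μ, ∑ i, b i * X i ω ≠ 0 := by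
  set Y : ι → Ω → ℝ := fun i ω => b i * X i ω
  have hYm : ∀ i, Measurable (Y i) := fun i => (hX i).const_mul (b i)
  have hY : iIndepFun Y μ := hind.comp (fun i x => b i * x) fun i => measurable_const_mul (b i)
  -- On the event `∑ i, Y i = 0`, `X k` equals `W`, a function of the other coordinates.
  set W : Ω → ℝ := fun ω => -(∑ i ∈ Finset.univ.erase k, Y i ω) / b k
  have hXW : IndepFun (X k) W μ := by
    have h := (hY.indepFun_finsetSum_of_notMem hYm (Finset.notMem_erase k Finset.univ)).symm.comp
      (measurable_id.div_const (b k)) (measurable_id.neg.div_const (b k))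
    convert h using 1
    · funext ω; simp [Y, hk]
    · funext ω; simp [W, Finset.sum_apply]
  have hWm : Measurable W := (Finset.measurable_sum _ fun i _ => hYm i).neg.div_const _
  rw [ae_iff]
  refine measure_mono_null (fun ω hω => ?_) (hXW.measure_eq_eq_zero (hX k) hWm)
  rw [Set.mem_ofPred_eq, not_not, ← Finset.add_sum_erase _ _ (Finset.mem_univ k)] at hω
  simp only [Set.mem_ofPred_eq, W, Y]
  field_simp
  linarith

end ProbabilityTheory

lemma dotProduct_empCov_mulVec (d n : ℕ) (ys : ℕ → Fin d → ℝ) (b : Fin d → ℝ) :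
    b ⬝ᵥ empCov d n ys *ᵥ b = (n : ℝ)⁻¹ * ∑ i ∈ Finset.range n, (b ⬝ᵥ ys i) ^ 2 := by
  simp only [empCov, dotProduct_mulVec, vecMul_smul, vecMul_sum, vecMul_vecMulVec,
    smul_dotProduct, sum_dotProduct, smul_eq_mul, sq, dotProduct_comm (ys _) b]

lemma cconv_single_zero {d : ℕ} [NeZero d] (c : ℝ) (z : Fin d → ℝ) :
    cconv d (Pi.single 0 c) z = c • z := by
  funext u
  simp [cconv, Pi.single_apply]

lemma exists_cconv_dotProduct_empCov_mulVec_eq {d n : ℕ} (zs : ℕ → Fin d → ℝ) {b : Fin d → ℝ}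
    (hz : ∃ i < n, b ⬝ᵥ zs i ≠ 0) {T : ℝ} (hT : 0 ≤ T) :
    ∃ a : Fin d → ℝ, b ⬝ᵥ empCov d n (fun i => cconv d a (zs i)) *ᵥ b = T := by
  obtain ⟨i₀, hi₀, hbz⟩ := hz
  have : NeZero d := ⟨by rintro rfl; simp at hbz⟩
  have hS : 0 < ∑ i ∈ Finset.range n, (b ⬝ᵥ zs i) ^ 2 := Finset.sum_pos'
    (fun i _ => sq_nonneg _) ⟨i₀, Finset.mem_range.mpr hi₀, sq_pos_of_ne_zero hbz⟩
  have hn : (n : ℝ) ≠ 0 := Nat.cast_ne_zero.mpr (by omega)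
  refine ⟨Pi.single 0 (Real.sqrt (T * n / ∑ i ∈ Finset.range n, (b ⬝ᵥ zs i) ^ 2)), ?_⟩
  simp only [cconv_single_zero, dotProduct_empCov_mulVec, dotProduct_smul, smul_eq_mul, mul_pow,
    ← Finset.mul_sum]
  rw [Real.sq_sqrt (by positivity)]
  field_simp

lemma Vreal_eq_sq_sub (d n : ℕ) (xs zs : ℕ → Fin d → ℝ) (a b : Fin d → ℝ) :
    Vreal d n xs zs a b = (b ⬝ᵥ empCov d n xs *ᵥ b -
      b ⬝ᵥ empCov d n (fun i => cconv d a (zs i)) *ᵥ b) ^ 2 := by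
  rw [Vreal, sub_mulVec, dotProduct_sub]

lemma IsWhiteNoisePair.ae_dotProduct_ne_zero {Ω : Type*} [MeasureSpace Ω]
    [IsFiniteMeasure (ℙ : Measure Ω)] {d : ℕ} {zbar z : ℕ → Ω → Fin d → ℝ}
    (hwn : IsWhiteNoisePair d zbar z) (i : ℕ) {b : Fin d → ℝ} (hb : b ≠ 0) :
    ∀ᵐ ω ∂ℙ, b ⬝ᵥ z i ω ≠ 0 := by
  obtain ⟨-, hz, hind, hlaw⟩ := hwn
  obtain ⟨k, hk⟩ := Function.ne_iff.mp hb
  have : NullSingletonClass (Measure.map (fun ω => z i ω k) ℙ) := by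
    rw [show (fun ω => z i ω k) = coords d zbar z (true, i, k) from rfl, hlaw]
    exact nullSingletonClass_gaussianReal one_ne_zero
  exact (hind.precomp (g := fun j => (true, i, j)) fun _ _ h => by simpa using h).ae_sum_mul_ne_zero
    (X := fun j ω => z i ω j) (fun j => (measurable_pi_apply j).comp (hz i)) hk

theorem stmt6_general {d n : ℕ} (hn : 1 ≤ n)
    {Ω : Type*} [MeasureSpace Ω] [IsProbabilityMeasure (ℙ : Measure Ω)]
    (abar : Fin d → ℝ) (zbar z : ℕ → Ω → Fin d → ℝ) (hwn : IsWhiteNoisePair d zbar z)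
    (b : Fin d → ℝ) (hb : b ≠ 0) :
    ∀ᵐ ω ∂ℙ,
      (∃ a : Fin d → ℝ,
          b ⬝ᵥ empCov d n (fun i => cconv d a (z i ω)) *ᵥ b =
            b ⬝ᵥ empCov d n (fun i => cconv d abar (zbar i ω)) *ᵥ b) ∧
        (∃ a : Fin d → ℝ,
          Vreal d n (fun i => cconv d abar (zbar i ω)) (fun i => z i ω) a b = 0) ∧
        IsLeast {t : ℝ | ∃ a : Fin d → ℝ,
          t = Vreal d n (fun i => cconv d abar (zbar i ω)) (fun i => z i ω) a b} 0 := by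
  filter_upwards [hwn.ae_dotProduct_ne_zero 0 hb] with ω hω
  have hT : 0 ≤ b ⬝ᵥ empCov d n (fun i => cconv d abar (zbar i ω)) *ᵥ b := by
    rw [dotProduct_empCov_mulVec]
    positivity
  obtain ⟨a, ha⟩ := exists_cconv_dotProduct_empCov_mulVec_eq (fun i => z i ω) ⟨0, hn, hω⟩ hT
  have hV : Vreal d n (fun i => cconv d abar (zbar i ω)) (fun i => z i ω) a b = 0 := by
    rw [Vreal_eq_sq_sub, ha, sub_self, sq, mul_zero]
  exact ⟨⟨a, ha⟩, ⟨a, hV⟩, ⟨a, hV.symm⟩, by rintro _ ⟨a', rfl⟩; exact sq_nonneg _⟩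

theorem stmt6 {d n : ℕ} (hd : 1 ≤ d) (hn : 1 ≤ n)
    {Ω : Type*} [MeasureSpace Ω] [IsProbabilityMeasure (ℙ : Measure Ω)]
    (abar : Fin d → ℝ) (zbar z : ℕ → Ω → Fin d → ℝ) (hwn : IsWhiteNoisePair d zbar z)
    (b : Fin d → ℝ) (hb : b ≠ 0) :
    ∀ᵐ ω ∂ℙ,
      (∃ a : Fin d → ℝ,
          b ⬝ᵥ empCov d n (fun i => cconv d a (z i ω)) *ᵥ b =
            b ⬝ᵥ empCov d n (fun i => cconv d abar (zbar i ω)) *ᵥ b) ∧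
        (∃ a : Fin d → ℝ,
          Vreal d n (fun i => cconv d abar (zbar i ω)) (fun i => z i ω) a b = 0) ∧
        IsLeast {t : ℝ | ∃ a : Fin d → ℝ,
          t = Vreal d n (fun i => cconv d abar (zbar i ω)) (fun i => z i ω) a b} 0 :=
  stmt6_general hn abar zbar z hwn b hb

end
end

section
/- Let m = d and define the discrete Fourier discriminator β̊ by β̊_ℓ(u) = e^{i2πℓu/d} for 0 ≤ u < d and 0 ≤ ℓ < d. Then almost surely, for every α̊ ∈ A_n: r_{n,ℓ}(α̊, β̊) = 0 for all ℓ < d (so V_n(α̊, β̊) = 0), and all partial derivatives of V_n with respect to α and with respect to the real and imaginary parts of the β-variables vanish at (α̊, β̊); that is, (α̊, β̊) is an equilibrium of V_n. -/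
open MeasureTheory ProbabilityTheory Filter Matrix
open scoped Real

noncomputable section

/-- Hermitian pairing `⟨b, x⟩ = ∑_u b(u)* x(u)` between `b ∈ ℂ^d` and `x ∈ ℝ^d`. -/
def cInner (d : ℕ) (b : Fin d → ℂ) (x : Fin d → ℝ) : ℂ :=
  ∑ u : Fin d, (starRingEnd ℂ) (b u) * (x u : ℂ)

/-- `r_{n,ℓ}(α, β) = E_n(|⟨β_ℓ, X⟩|²) − E_n(|⟨β_ℓ, α ⋆ Z⟩|²)` for the complex
discriminator, given samples `x_i = xs i`, `z_i = zs i`. -/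
def rCpx (d n : ℕ) (xs zs : ℕ → Fin d → ℝ) (a : Fin d → ℝ) (bl : Fin d → ℂ) : ℝ :=
  (n : ℝ)⁻¹ * ∑ i ∈ Finset.range n, Complex.normSq (cInner d bl (xs i))
    - (n : ℝ)⁻¹ * ∑ i ∈ Finset.range n, Complex.normSq (cInner d bl (cconv d a (zs i)))

/-- The complex-discriminator objective `V_n(α, β) = ∑_{ℓ<m} r_{n,ℓ}(α, β)²`. -/
def VCpx (d n m : ℕ) (xs zs : ℕ → Fin d → ℝ) (a : Fin d → ℝ)
    (b : Fin m → Fin d → ℂ) : ℝ :=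
  ∑ ℓ : Fin m, rCpx d n xs zs a (b ℓ) ^ 2

/-- The discrete Fourier discriminator `β̊_ℓ(u) = e^{i2πℓu/d}`. -/
def fourierDisc (d : ℕ) : Fin d → Fin d → ℂ :=
  fun ℓ u => Complex.exp (2 * Real.pi * Complex.I * ((ℓ : ℕ) : ℂ) * ((u : ℕ) : ℂ) / (d : ℂ))

/-
The Fourier discriminator diagonalises circular convolution: `⟨β̊_ℓ, x⟩ = x̂(ω_ℓ)` and
`(α ⋆ z)^ = α̂ ẑ`, so `r_{n,ℓ}(α, β̊) = E_n|X̂(ω_ℓ)|² - |α̂(ω_ℓ)|² E_n|Ẑ(ω_ℓ)|²`, which vanishes on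
`A_n` as soon as every `E_n|Ẑ(ω)|²` is nonzero. That holds almost surely: `Re Ẑ(ω)` is the inner
product of a standard Gaussian vector with a nonzero vector, hence a nondegenerate real Gaussian.
Finally `V_n` is a sum of squares of differentiable functions that all vanish at `(α̊, β̊)`, so every
directional derivative of `V_n` vanishes there.
-/

open scoped RealInnerProductSpace

def dftKernel (d : ℕ) (k u : Fin d) : ℂ :=
  Complex.exp (-(2 * Real.pi * Complex.I * ((k : ℕ) : ℂ) * ((u : ℕ) : ℂ)) / (d : ℂ))

lemma dft_eq_sum_dftKernel (d : ℕ) (x : Fin d → ℝ) (k : Fin d) :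
    dft d x k = ∑ u, (x u : ℂ) * dftKernel d k u := rfl

lemma dftKernel_add {d : ℕ} (k u v : Fin d) :
    dftKernel d k (u + v) = dftKernel d k u * dftKernel d k v := by
  have hd : (d : ℂ) ≠ 0 := Nat.cast_ne_zero.mpr (Fin.pos u).ne'
  set q := ((u : ℕ) + v) / d
  -- reducing `u + v` mod `d` shifts the exponent by `2πi k q`
  have hsum : (((u + v : Fin d) : ℕ) : ℂ) + d * q = u + v := by
    rw [Fin.val_add]; exact_mod_cast Nat.mod_add_div _ _
  rw [dftKernel, dftKernel, dftKernel, ← Complex.exp_add, Complex.exp_eq_exp_iff_exists_int]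
  refine ⟨((k * q : ℕ) : ℤ), ?_⟩
  rw [Int.cast_natCast, Nat.cast_mul]
  field_simp
  linear_combination (-(k : ℂ)) * hsum

lemma dft_cconv (d : ℕ) (a z : Fin d → ℝ) (k : Fin d) :
    dft d (cconv d a z) k = dft d a k * dft d z k := by
  have : NeZero d := ⟨k.pos.ne'⟩
  calc dft d (cconv d a z) k
      = ∑ v, ∑ u, (a v : ℂ) * z (u - v) * dftKernel d k u := by
        simp only [dft_eq_sum_dftKernel, cconv, Complex.ofReal_sum, Complex.ofReal_mul,
          Finset.sum_mul]
        exact Finset.sum_comm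
    _ = ∑ v, ∑ w, (a v : ℂ) * z w * dftKernel d k (v + w) :=
        Finset.sum_congr rfl fun v _ =>
          Fintype.sum_equiv (Equiv.subRight v) _ _ fun u => by simp
    _ = dft d a k * dft d z k := by
        simp only [dft_eq_sum_dftKernel, dftKernel_add, Finset.sum_mul_sum, mul_mul_mul_comm]

lemma re_dft (d : ℕ) (y : Fin d → ℝ) (k : Fin d) :
    (dft d y k).re = ∑ u, y u * (dftKernel d k u).re := by
  simp only [dft_eq_sum_dftKernel, Complex.re_sum, Complex.re_ofReal_mul]

lemma conj_fourierDisc (d : ℕ) (ℓ u : Fin d) :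
    (starRingEnd ℂ) (fourierDisc d ℓ u) = dftKernel d ℓ u := by
  rw [fourierDisc, dftKernel, ← Complex.exp_conj]
  congr 1
  simp only [map_div₀, map_mul, map_ofNat, Complex.conj_ofReal, Complex.conj_I, map_natCast]
  ring

lemma cInner_fourierDisc (d : ℕ) (ℓ : Fin d) (x : Fin d → ℝ) :
    cInner d (fourierDisc d ℓ) x = dft d x ℓ := by
  simp only [cInner, conj_fourierDisc, dft_eq_sum_dftKernel, mul_comm]

lemma rCpx_fourierDisc (d n : ℕ) (xs zs : ℕ → Fin d → ℝ) (a : Fin d → ℝ) (ℓ : Fin d) :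
    rCpx d n xs zs a (fourierDisc d ℓ)
      = empPS d n xs ℓ - Complex.normSq (dft d a ℓ) * empPS d n zs ℓ := by
  simp only [rCpx, empPS, cInner_fourierDisc, dft_cconv, Complex.normSq_mul, ← Finset.mul_sum]
  ring

lemma rCpx_fourierDisc_eq_zero {d n : ℕ} {xs zs : ℕ → Fin d → ℝ} {a : Fin d → ℝ} {ℓ : Fin d}
    (hz : empPS d n zs ℓ ≠ 0)
    (ha : Complex.normSq (dft d a ℓ) = empPS d n xs ℓ / empPS d n zs ℓ) :
    rCpx d n xs zs a (fourierDisc d ℓ) = 0 := by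
  rw [rCpx_fourierDisc, ha, div_mul_cancel₀ _ hz, sub_self]

lemma empPS_ne_zero {d n : ℕ} {y : ℕ → Fin d → ℝ} {k : Fin d} (hn : 1 ≤ n)
    (hy : dft d (y 0) k ≠ 0) : empPS d n y k ≠ 0 := by
  have hsum : 0 < ∑ i ∈ Finset.range n, Complex.normSq (dft d (y i) k) :=
    Finset.sum_pos' (fun i _ => Complex.normSq_nonneg _)
      ⟨0, Finset.mem_range.2 hn, Complex.normSq_pos.2 hy⟩
  exact (mul_pos (inv_pos.2 (Nat.cast_pos.2 hn)) hsum).ne'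

@[fun_prop]
lemma Differentiable.update {𝕜 ι F : Type*} [NontriviallyNormedField 𝕜] [Fintype ι]
    [DecidableEq ι] [NormedAddCommGroup F] [NormedSpace 𝕜 F] (x : ι → F) (i : ι) {g : 𝕜 → F}
    (hg : Differentiable 𝕜 g) : Differentiable 𝕜 fun t => Function.update x i (g t) :=
  ((contDiff_update 1 x i).differentiable one_ne_zero).comp hg

@[fun_prop]
lemma Differentiable.normSq {f : ℝ → ℂ} (hf : Differentiable ℝ f) :
    Differentiable ℝ fun t => Complex.normSq (f t) := by
  simp only [Complex.normSq_apply]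
  have hre : Differentiable ℝ fun t => (f t).re := Complex.reCLM.differentiable.comp hf
  have him : Differentiable ℝ fun t => (f t).im := Complex.imCLM.differentiable.comp hf
  fun_prop

lemma differentiable_rCpx {d n : ℕ} (xs zs : ℕ → Fin d → ℝ) {A : ℝ → Fin d → ℝ}
    {B : ℝ → Fin d → ℂ} (hA : Differentiable ℝ A) (hB : Differentiable ℝ B) :
    Differentiable ℝ fun t => rCpx d n xs zs (A t) (B t) := by
  have hconj (u : Fin d) : Differentiable ℝ fun t => (starRingEnd ℂ) (B t u) :=
    Complex.conjCLE.differentiable.comp (differentiable_pi.1 hB u)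
  unfold rCpx cInner cconv
  fun_prop

lemma hasDerivAt_VCpx_eq_zero {d n m : ℕ} (xs zs : ℕ → Fin d → ℝ) {A : ℝ → Fin d → ℝ}
    {B : ℝ → Fin m → Fin d → ℂ} (hA : Differentiable ℝ A) (hB : Differentiable ℝ B) {t₀ : ℝ}
    (h : ∀ ℓ, rCpx d n xs zs (A t₀) (B t₀ ℓ) = 0) :
    HasDerivAt (fun t => VCpx d n m xs zs (A t) (B t)) 0 t₀ := by
  have hr (ℓ : Fin m) := differentiable_rCpx (n := n) xs zs hA (differentiable_pi.1 hB ℓ)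
  simpa [VCpx, h] using HasDerivAt.fun_sum fun ℓ _ => ((hr ℓ) t₀).hasDerivAt.pow 2

lemma ae_inner_ne_stdGaussian {E : Type*} [NormedAddCommGroup E] [InnerProductSpace ℝ E]
    [FiniteDimensional ℝ E] [MeasurableSpace E] [BorelSpace E] {c : E} (hc : c ≠ 0) (x : ℝ) :
    ∀ᵐ y ∂stdGaussian E, ⟪c, y⟫ ≠ x := by
  have hmap : (stdGaussian E).map (innerSL ℝ c) = gaussianReal 0 (‖c‖ ^ 2).toNNReal := by
    rw [IsGaussian.map_eq_gaussianReal, integral_strongDual_stdGaussian,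
      variance_dual_stdGaussian, innerSL_apply_norm]
  have hv : (‖c‖ ^ 2).toNNReal ≠ 0 := by
    simpa [Real.toNNReal_eq_zero, not_le] using hc
  have hnull := gaussianReal_absolutelyContinuous 0 hv (Real.volume_singleton (a := x))
  rw [← hmap, Measure.map_apply (innerSL ℝ c).continuous.measurable
    (measurableSet_singleton x)] at hnull
  exact measure_eq_zero_iff_ae_notMem.mp hnull

lemma IsWhiteNoisePair.measurable {Ω : Type*} [MeasureSpace Ω] {d : ℕ}
    {zbar z : ℕ → Ω → Fin d → ℝ} (hwn : IsWhiteNoisePair d zbar z) (i : ℕ) :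
    Measurable (z i) :=
  hwn.2.1 i

lemma IsWhiteNoisePair.map_eq_pi {Ω : Type*} [MeasureSpace Ω]
    [IsProbabilityMeasure (ℙ : Measure Ω)] {d : ℕ} {zbar z : ℕ → Ω → Fin d → ℝ}
    (hwn : IsWhiteNoisePair d zbar z) (i : ℕ) :
    (ℙ : Measure Ω).map (z i) = Measure.pi fun _ => gaussianReal 0 1 := by
  obtain ⟨-, hmz, hindep, hlaw⟩ := hwn
  have hcoord : iIndepFun (fun u ω => z i ω u) ℙ :=
    hindep.precomp (g := fun u : Fin d => (true, i, u)) fun u v h => by simpa using h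
  rw [iIndepFun_iff_map_fun_eq_pi_map (f := fun u ω => z i ω u)
    fun u => ((measurable_pi_apply u).comp (hmz i)).aemeasurable] at hcoord
  convert hcoord using 2
  exact funext fun u => (hlaw (true, i, u)).symm

lemma IsWhiteNoisePair.map_toLp_eq_stdGaussian {Ω : Type*} [MeasureSpace Ω]
    [IsProbabilityMeasure (ℙ : Measure Ω)]
    {d : ℕ} {zbar z : ℕ → Ω → Fin d → ℝ} (hwn : IsWhiteNoisePair d zbar z) (i : ℕ) :
    (ℙ : Measure Ω).map (fun ω => WithLp.toLp 2 (z i ω))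
      = stdGaussian (EuclideanSpace ℝ (Fin d)) := by
  rw [← map_pi_eq_stdGaussian, ← hwn.map_eq_pi i,
    Measure.map_map (WithLp.measurable_toLp 2 _) (hwn.measurable i)]
  rfl

lemma IsWhiteNoisePair.ae_dft_ne_zero {Ω : Type*} [MeasureSpace Ω]
    [IsProbabilityMeasure (ℙ : Measure Ω)]
    {d : ℕ} {zbar z : ℕ → Ω → Fin d → ℝ} (hwn : IsWhiteNoisePair d zbar z) :
    ∀ᵐ ω ∂ℙ, ∀ i k, dft d (z i ω) k ≠ 0 := by
  simp only [ae_all_iff]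
  intro i k
  set c : EuclideanSpace ℝ (Fin d) := WithLp.toLp 2 fun u => (dftKernel d k u).re
  have hc : c ≠ 0 := fun h => by
    simpa [c, dftKernel] using congrArg (fun c : EuclideanSpace ℝ (Fin d) => c ⟨0, k.pos⟩) h
  have hinner := ae_inner_ne_stdGaussian hc 0
  rw [← hwn.map_toLp_eq_stdGaussian i] at hinner
  filter_upwards [ae_of_ae_map ((WithLp.measurable_toLp 2 _).comp (hwn.measurable i)).aemeasurable
    hinner] with ω hω hdft
  refine hω ?_
  rw [EuclideanSpace.inner_eq_star_dotProduct]
  simpa [c, dotProduct, re_dft, mul_comm] using congrArg Complex.re hdft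

theorem stmt7_general {d n : ℕ} (hn : 1 ≤ n)
    {Ω : Type*} [MeasureSpace Ω] [IsProbabilityMeasure (ℙ : Measure Ω)]
    (abar : Fin d → ℝ) (zbar z : ℕ → Ω → Fin d → ℝ) (hwn : IsWhiteNoisePair d zbar z) :
    ∀ᵐ ω ∂ℙ, ∀ a₀ ∈ An d n abar (fun i => zbar i ω) (fun i => z i ω),
      (∀ ℓ : Fin d,
        rCpx d n (fun i => cconv d abar (zbar i ω)) (fun i => z i ω) a₀ (fourierDisc d ℓ)
          = 0) ∧
      VCpx d n d (fun i => cconv d abar (zbar i ω)) (fun i => z i ω) a₀ (fourierDisc d)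
          = 0 ∧
      (∀ u : Fin d,
        HasDerivAt (fun t : ℝ =>
          VCpx d n d (fun i => cconv d abar (zbar i ω)) (fun i => z i ω)
            (Function.update a₀ u t) (fourierDisc d)) 0 (a₀ u)) ∧
      (∀ ℓ v : Fin d,
        HasDerivAt (fun t : ℝ =>
          VCpx d n d (fun i => cconv d abar (zbar i ω)) (fun i => z i ω) a₀
            (Function.update (fourierDisc d) ℓ
              (Function.update (fourierDisc d ℓ) v (fourierDisc d ℓ v + (t : ℂ))))) 0 0) ∧
      (∀ ℓ v : Fin d,
        HasDerivAt (fun t : ℝ =>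
          VCpx d n d (fun i => cconv d abar (zbar i ω)) (fun i => z i ω) a₀
            (Function.update (fourierDisc d) ℓ
              (Function.update (fourierDisc d ℓ) v
                (fourierDisc d ℓ v + (t : ℂ) * Complex.I)))) 0 0) := by
  filter_upwards [hwn.ae_dft_ne_zero] with ω hω a₀ ha₀
  have hr (ℓ : Fin d) : rCpx d n (fun i => cconv d abar (zbar i ω)) (fun i => z i ω) a₀
      (fourierDisc d ℓ) = 0 :=
    rCpx_fourierDisc_eq_zero (empPS_ne_zero hn (hω 0 ℓ)) (ha₀ ℓ)
  refine ⟨hr, by simp [VCpx, hr], fun u => ?_, fun ℓ v => ?_, fun ℓ v => ?_⟩ <;>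
    refine hasDerivAt_VCpx_eq_zero _ _ (by fun_prop) (by fun_prop) fun ℓ' => ?_ <;>
    simpa using hr ℓ'

theorem stmt7 {d n : ℕ} (hd : 1 ≤ d) (hn : 1 ≤ n)
    {Ω : Type*} [MeasureSpace Ω] [IsProbabilityMeasure (ℙ : Measure Ω)]
    (abar : Fin d → ℝ) (zbar z : ℕ → Ω → Fin d → ℝ) (hwn : IsWhiteNoisePair d zbar z) :
    ∀ᵐ ω ∂ℙ, ∀ a₀ ∈ An d n abar (fun i => zbar i ω) (fun i => z i ω),
      (∀ ℓ : Fin d,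
        rCpx d n (fun i => cconv d abar (zbar i ω)) (fun i => z i ω) a₀ (fourierDisc d ℓ)
          = 0) ∧
      VCpx d n d (fun i => cconv d abar (zbar i ω)) (fun i => z i ω) a₀ (fourierDisc d)
          = 0 ∧
      (∀ u : Fin d,
        HasDerivAt (fun t : ℝ =>
          VCpx d n d (fun i => cconv d abar (zbar i ω)) (fun i => z i ω)
            (Function.update a₀ u t) (fourierDisc d)) 0 (a₀ u)) ∧
      (∀ ℓ v : Fin d,
        HasDerivAt (fun t : ℝ =>
          VCpx d n d (fun i => cconv d abar (zbar i ω)) (fun i => z i ω) a₀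
            (Function.update (fourierDisc d) ℓ
              (Function.update (fourierDisc d ℓ) v (fourierDisc d ℓ v + (t : ℂ))))) 0 0) ∧
      (∀ ℓ v : Fin d,
        HasDerivAt (fun t : ℝ =>
          VCpx d n d (fun i => cconv d abar (zbar i ω)) (fun i => z i ω) a₀
            (Function.update (fourierDisc d) ℓ
              (Function.update (fourierDisc d ℓ) v
                (fourierDisc d ℓ v + (t : ℂ) * Complex.I)))) 0 0) :=
  stmt7_general hn abar zbar z hwn
end
end
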